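/- arXiv:2402.16974 — 12 statements merged into one kernel-verified Lean document; each statement's English description precedes it below -/
import Mathlib

section
/- Let σ be a closed strongly convex cone in a finite-dimensional real vector space V. Then the relative interior of the dual cone σ∨ equals the set of φ ∈ σ∨ such that φ(x) > 0 for all nonzero x ∈ σ. -/
open RealInnerProductSpace Set Filter Topology ProperCone

/-!
If `σ` is salient, its dual spans `V`: a vector orthogonal to `σ∨` lies, with its negative, in
`σ∨∨ = σ` (Farkas). Hence the relative interior of `σ∨` is its interior. If `y` is positive on
`σ \ {0}`, compactness of `σ ∩ sphere 0 1` gives `m > 0` with `m ‖x‖ ≤ ⟪x, y⟫` on `σ`, so the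
ball of radius `m` around `y` lies in `σ∨`. Conversely, if `y` is interior then `y - t x ∈ σ∨` for
some `t > 0`, whence `⟪x, y⟫ ≥ t ‖x‖² > 0`.
-/

theorem intrinsicInterior_eq_interior_of_affineSpan_eq_top {𝕜 V P : Type*} [Ring 𝕜]
    [AddCommGroup V] [Module 𝕜 V] [TopologicalSpace P] [AddTorsor V P] {s : Set P}
    (h : affineSpan 𝕜 s = ⊤) : intrinsicInterior 𝕜 s = interior s := by
  refine (interior_subset_intrinsicInterior).antisymm' ?_
  rintro _ ⟨x, hx, rfl⟩
  have hopen : IsOpenMap ((↑) : affineSpan 𝕜 s → P) :=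
    (h ▸ isOpen_univ : IsOpen (affineSpan 𝕜 s : Set P)).isOpenMap_subtype_val
  exact interior_mono (image_preimage_subset _ _) (hopen.image_interior_subset _ ⟨x, hx, rfl⟩)

section Cone

variable {E : Type*} [AddCommGroup E] [Module ℝ E] {s : Set E}

theorem Convex.add_mem_of_smul_mem (hconv : Convex ℝ s)
    (hcone : ∀ x ∈ s, ∀ t : ℝ, 0 < t → t • x ∈ s) {x y : E} (hx : x ∈ s) (hy : y ∈ s) :
    x + y ∈ s := by
  obtain ⟨c, hc, z, hz, hcz⟩ := (ConvexCone.mem_hull_of_convex hconv).1 <|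
    add_mem (ConvexCone.subset_hull hx) (ConvexCone.subset_hull hy)
  exact hcz ▸ hcone z hz c hc

theorem IsClosed.zero_mem_of_smul_mem [TopologicalSpace E] [ContinuousSMul ℝ E]
    (hclosed : IsClosed s) (hcone : ∀ x ∈ s, ∀ t : ℝ, 0 < t → t • x ∈ s) (hne : s.Nonempty) :
    (0 : E) ∈ s := by
  obtain ⟨x, hx⟩ := hne
  have hlim : Tendsto (fun t : ℝ => t • x) (𝓝[>] 0) (𝓝 0) := by
    have hcont : Continuous fun t : ℝ => t • x := continuous_id.smul continuous_const
    simpa using (hcont.tendsto 0).mono_left nhdsWithin_le_nhds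
  exact hclosed.mem_of_tendsto hlim (eventually_mem_nhdsWithin.mono fun t ht => hcone x hx t ht)

end Cone

namespace ProperCone

variable {E : Type*} [NormedAddCommGroup E] [InnerProductSpace ℝ E] {s : Set E} {x y : E}

theorem innerDual_innerDual_of_isClosed [CompleteSpace E] (hclosed : IsClosed s)
    (hcone : ∀ x ∈ s, ∀ t : ℝ, 0 < t → t • x ∈ s) (hconv : Convex ℝ s) (hne : s.Nonempty) :
    (innerDual (innerDual s : Set E) : Set E) = s :=
  let C : ProperCone ℝ E :=
    { carrier := s
      add_mem' := hconv.add_mem_of_smul_mem hcone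
      zero_mem' := hclosed.zero_mem_of_smul_mem hcone hne
      smul_mem' := fun ⟨c, hc⟩ x hx => by
        rcases hc.eq_or_lt with rfl | hc
        · simpa using hclosed.zero_mem_of_smul_mem hcone hne
        · exact hcone x hx c hc
      isClosed' := hclosed }
  congrArg SetLike.coe C.innerDual_innerDual

theorem affineSpan_innerDual_eq_top [FiniteDimensional ℝ E] (hclosed : IsClosed s)
    (hcone : ∀ x ∈ s, ∀ t : ℝ, 0 < t → t • x ∈ s) (hconv : Convex ℝ s)
    (hsalient : ∀ x ∈ s, -x ∈ s → x = 0) : affineSpan ℝ (innerDual s : Set E) = ⊤ := by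
  rcases s.eq_empty_or_nonempty with rfl | hne
  · simp [AffineSubspace.span_univ]
  have hdual := innerDual_innerDual_of_isClosed hclosed hcone hconv hne
  have hspan : Submodule.span ℝ (innerDual s : Set E) = ⊤ := by
    refine Submodule.orthogonal_eq_bot_iff.1 <| (Submodule.eq_bot_iff _).2 fun v hv => ?_
    have hperp : ∀ u ∈ innerDual s, ⟪u, v⟫ = 0 := fun u hu => hv u (Submodule.subset_span hu)
    refine hsalient v (hdual ▸ fun u hu => (hperp u hu).ge) (hdual ▸ fun u hu => ?_)
    simp [hperp u hu]
  rw [AffineSubspace.affineSpan_eq_top_iff_vectorSpan_eq_top_of_nonempty ℝ E E ⟨0, zero_mem _⟩,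
    vectorSpan_eq_span_vsub_set_right ℝ (zero_mem _)]
  simpa using hspan

theorem inner_pos_of_mem_interior_innerDual [CompleteSpace E]
    (hy : y ∈ interior (innerDual s : Set E)) (hx : x ∈ s) (hx₀ : x ≠ 0) : 0 < ⟪x, y⟫ := by
  have hlim : Tendsto (fun t : ℝ => y - t • x) (𝓝[>] 0) (𝓝 y) := by
    have hcont : Continuous fun t : ℝ => y - t • x := by fun_prop
    simpa using (hcont.tendsto 0).mono_left nhdsWithin_le_nhds
  obtain ⟨t, hmem, ht⟩ :=
    ((hlim.eventually (mem_interior_iff_mem_nhds.1 hy)).and self_mem_nhdsWithin).exists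
  have hsub : 0 ≤ ⟪x, y⟫ - t * ‖x‖ ^ 2 := by
    simpa [inner_sub_right, real_inner_smul_right] using hmem hx
  have : 0 < t * ‖x‖ ^ 2 := mul_pos ht (by positivity)
  linarith

theorem exists_pos_mul_norm_le_inner [FiniteDimensional ℝ E] (hclosed : IsClosed s)
    (hcone : ∀ x ∈ s, ∀ t : ℝ, 0 < t → t • x ∈ s) (hpos : ∀ x ∈ s, x ≠ 0 → 0 < ⟪x, y⟫) :
    ∃ m > 0, ∀ x ∈ s, m * ‖x‖ ≤ ⟪x, y⟫ := by
  obtain ⟨m, hm, hmin⟩ := ((isCompact_sphere (0 : E) 1).inter_left hclosed).exists_forall_le'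
    (f := fun x => ⟪x, y⟫) (by fun_prop) (a := 0)
    fun x hx => hpos x hx.1 (ne_zero_of_mem_unit_sphere ⟨x, hx.2⟩)
  refine ⟨m, hm, fun x hx => ?_⟩
  rcases eq_or_ne x 0 with rfl | hx₀
  · simp
  have hn : 0 < ‖x‖ := norm_pos_iff.2 hx₀
  have hunit := hmin (‖x‖⁻¹ • x) ⟨hcone x hx _ (inv_pos.2 hn), by simp [norm_smul, hn.ne']⟩
  rwa [real_inner_smul_left, le_inv_mul_iff₀ hn, mul_comm] at hunit

theorem ball_subset_innerDual [CompleteSpace E] {m : ℝ} (hle : ∀ x ∈ s, m * ‖x‖ ≤ ⟪x, y⟫) :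
    Metric.ball y m ⊆ innerDual s := by
  intro z hz x hx
  have hzy : ‖z - y‖ < m := by rwa [← dist_eq_norm]
  calc 0 ≤ ‖x‖ * (m - ‖z - y‖) := mul_nonneg (norm_nonneg x) (by linarith)
    _ = m * ‖x‖ - ‖x‖ * ‖z - y‖ := by ring
    _ ≤ ⟪x, y⟫ + ⟪x, z - y⟫ := by
      linarith [hle x hx, neg_le_of_abs_le (abs_real_inner_le_norm x (z - y))]
    _ = ⟪x, z⟫ := by rw [inner_sub_right]; ring

theorem mem_interior_innerDual_iff [FiniteDimensional ℝ E] (hclosed : IsClosed s)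
    (hcone : ∀ x ∈ s, ∀ t : ℝ, 0 < t → t • x ∈ s) :
    y ∈ interior (innerDual s : Set E) ↔ ∀ x ∈ s, x ≠ 0 → 0 < ⟪x, y⟫ := by
  refine ⟨fun hy x hx hx₀ => inner_pos_of_mem_interior_innerDual hy hx hx₀, fun hpos => ?_⟩
  obtain ⟨m, hm, hle⟩ := exists_pos_mul_norm_le_inner hclosed hcone hpos
  exact mem_interior.2 ⟨_, ball_subset_innerDual hle, Metric.isOpen_ball, Metric.mem_ball_self hm⟩

end ProperCone

/-- For a closed strongly convex cone `σ`, the relative interior of the dual cone consists of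
those `φ` in the dual cone that are strictly positive on all nonzero elements of `σ`. -/
theorem intrinsicInterior_dualCone {V : Type*} [NormedAddCommGroup V] [InnerProductSpace ℝ V]
    [FiniteDimensional ℝ V] (σ : Set V) (hclosed : IsClosed σ)
    (hcone : ∀ x ∈ σ, ∀ t : ℝ, 0 < t → t • x ∈ σ) (hconv : Convex ℝ σ)
    (hstrong : ∀ x ∈ σ, -x ∈ σ → x = 0) :
    intrinsicInterior ℝ {y : V | ∀ x ∈ σ, 0 ≤ ⟪y, x⟫} =
      {y : V | (∀ x ∈ σ, 0 ≤ ⟪y, x⟫) ∧ ∀ x ∈ σ, x ≠ 0 → 0 < ⟪y, x⟫} := by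
  have hdual : {y : V | ∀ x ∈ σ, 0 ≤ ⟪y, x⟫} = innerDual σ := by
    ext; simp [real_inner_comm]
  rw [hdual, intrinsicInterior_eq_interior_of_affineSpan_eq_top
    (affineSpan_innerDual_eq_top hclosed hcone hconv hstrong)]
  ext y
  rw [mem_interior_innerDual_iff hclosed hcone]
  simp only [mem_ofPred_eq, real_inner_comm y]
  refine ⟨fun hpos => ⟨fun x hx => ?_, hpos⟩, And.right⟩
  rcases eq_or_ne x 0 with rfl | hx₀
  · simp
  · exact (hpos x hx hx₀).le
end

section
/- Let σ be a convex cone containing 0 in a real vector space, and let τ be an extremal subcone of σ. If σ is closed, then τ is closed. -/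
/-- An extremal subcone of a closed convex cone containing `0` is closed. -/
theorem extremal_subcone_isClosed {V : Type*} [NormedAddCommGroup V] [NormedSpace ℝ V]
    [FiniteDimensional ℝ V] (σ τ : Set V)
    (hcone : ∀ x ∈ σ, ∀ t : ℝ, 0 < t → t • x ∈ σ) (hconv : Convex ℝ σ)
    (h0 : (0 : V) ∈ σ) (hclosed : IsClosed σ)
    (hτne : τ.Nonempty) (hτsub : τ ⊆ σ) (hτconv : Convex ℝ τ)
    (hτcone : ∀ x ∈ τ, ∀ t : ℝ, 0 < t → t • x ∈ τ)
    (hτext : ∀ x ∈ σ, ∀ y ∈ σ, x + y ∈ τ → x ∈ τ ∧ y ∈ τ) :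
    IsClosed τ := by
  obtain ⟨t₀, ht₀⟩ := hτne
  -- τ is closed under addition
  have hadd : ∀ x ∈ τ, ∀ y ∈ τ, x + y ∈ τ := by
    intro x hx y hy
    have hmid : (1/2 : ℝ) • x + (1/2 : ℝ) • y ∈ τ :=
      hτconv hx hy (by norm_num) (by norm_num) (by norm_num)
    have h2 := hτcone _ hmid 2 (by norm_num)
    have : (2 : ℝ) • ((1/2 : ℝ) • x + (1/2 : ℝ) • y) = x + y := by
      rw [smul_add, smul_smul, smul_smul]; norm_num
    rwa [this] at h2
  -- every element of the span of τ is a difference of elements of τ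
  have hspan : ∀ x ∈ Submodule.span ℝ τ, ∃ a ∈ τ, ∃ b ∈ τ, x = a - b := by
    intro x hx
    induction hx using Submodule.span_induction with
    | mem x hx =>
      exact ⟨x + t₀, hadd x hx t₀ ht₀, t₀, ht₀, by abel⟩
    | zero => exact ⟨t₀, ht₀, t₀, ht₀, by simp⟩
    | add x y _ _ hx hy =>
      obtain ⟨a, ha, b, hb, rfl⟩ := hx
      obtain ⟨c, hc, d, hd, rfl⟩ := hy
      exact ⟨a + c, hadd a ha c hc, b + d, hadd b hb d hd, by abel⟩
    | smul c x _ hx =>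
      obtain ⟨a, ha, b, hb, rfl⟩ := hx
      rcases lt_trichotomy c 0 with hc | hc | hc
      · refine ⟨(-c) • b, hτcone b hb _ (by linarith), (-c) • a, hτcone a ha _ (by linarith), ?_⟩
        rw [smul_sub]; rw [neg_smul, neg_smul]; abel
      · exact ⟨t₀, ht₀, t₀, ht₀, by simp [hc]⟩
      · exact ⟨c • a, hτcone a ha c hc, c • b, hτcone b hb c hc, by rw [smul_sub]⟩
  -- τ = σ ∩ span τ
  have hkey : τ = σ ∩ (Submodule.span ℝ τ : Set V) := by
    apply Set.Subset.antisymm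
    · exact fun x hx => ⟨hτsub hx, Submodule.subset_span hx⟩
    · rintro x ⟨hxσ, hxspan⟩
      obtain ⟨a, ha, b, hb, rfl⟩ := hspan x hxspan
      have hab : (a - b) + b ∈ τ := by simpa using ha
      exact (hτext (a - b) hxσ b (hτsub hb) hab).1
  rw [hkey]
  exact hclosed.inter (Submodule.closed_of_finiteDimensional _)
end

section
/- Let σ be a convex cone containing 0 in a finite-dimensional real vector space V, let τ be an extremal subcone of σ, and let W be the linear span of τ. Then σ ∩ W = τ, and the image of σ under the projection V → V/W is a strongly convex cone. -/
/-- For an extremal subcone `τ` of a convex cone `σ` containing `0`, with `W` the linear span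
of `τ`, one has `σ ∩ W = τ`, and the image of `σ` in `V ⧸ W` is a strongly convex cone. -/
theorem inter_span_eq_and_image_stronglyConvex {V : Type*} [AddCommGroup V] [Module ℝ V]
    [FiniteDimensional ℝ V] (σ τ : Set V)
    (hcone : ∀ x ∈ σ, ∀ t : ℝ, 0 < t → t • x ∈ σ) (hconv : Convex ℝ σ)
    (h0 : (0 : V) ∈ σ)
    (hτne : τ.Nonempty) (hτsub : τ ⊆ σ) (hτconv : Convex ℝ τ)
    (hτcone : ∀ x ∈ τ, ∀ t : ℝ, 0 < t → t • x ∈ τ)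
    (hτext : ∀ x ∈ σ, ∀ y ∈ σ, x + y ∈ τ → x ∈ τ ∧ y ∈ τ) :
    σ ∩ (Submodule.span ℝ τ : Set V) = τ ∧
      ∀ z : V ⧸ Submodule.span ℝ τ,
        z ∈ (Submodule.span ℝ τ).mkQ '' σ → -z ∈ (Submodule.span ℝ τ).mkQ '' σ → z = 0 := by
  obtain ⟨c, hc⟩ := hτne
  have haddσ : ∀ x ∈ σ, ∀ y ∈ σ, x + y ∈ σ := by
    intro x hx y hy
    have h := hconv hx hy (by norm_num : (0:ℝ) ≤ 1/2) (by norm_num : (0:ℝ) ≤ 1/2) (by norm_num)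
    have h2 := hcone _ h 2 (by norm_num)
    have : (2:ℝ) • ((1/2:ℝ) • x + (1/2:ℝ) • y) = x + y := by module
    rwa [this] at h2
  have haddτ : ∀ x ∈ τ, ∀ y ∈ τ, x + y ∈ τ := by
    intro x hx y hy
    have h := hτconv hx hy (by norm_num : (0:ℝ) ≤ 1/2) (by norm_num : (0:ℝ) ≤ 1/2) (by norm_num)
    have h2 := hτcone _ h 2 (by norm_num)
    have : (2:ℝ) • ((1/2:ℝ) • x + (1/2:ℝ) • y) = x + y := by module
    rwa [this] at h2
  -- the difference set is a submodule
  set p : Submodule ℝ V :=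
    { carrier := {x | ∃ a ∈ τ, ∃ b ∈ τ, x = a - b}
      zero_mem' := ⟨c, hc, c, hc, by simp⟩
      add_mem' := by
        rintro x y ⟨a, ha, b, hb, rfl⟩ ⟨d, hd, e, he, rfl⟩
        exact ⟨a + d, haddτ a ha d hd, b + e, haddτ b hb e he, by abel⟩
      smul_mem' := by
        rintro r x ⟨a, ha, b, hb, rfl⟩
        rcases lt_trichotomy r 0 with hr | hr | hr
        · refine ⟨(-r) • b, hτcone b hb _ (by linarith), (-r) • a, hτcone a ha _ (by linarith),
            by module⟩
        · exact ⟨c, hc, c, hc, by simp [hr]⟩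
        · exact ⟨r • a, hτcone a ha r hr, r • b, hτcone b hb r hr, by module⟩ } with hp
  have hspan : (Submodule.span ℝ τ : Set V) ⊆ (p : Set V) := by
    apply Submodule.span_le.2
    intro a ha
    exact ⟨a + c, haddτ a ha c hc, c, hc, by abel⟩
  have hinter : σ ∩ (Submodule.span ℝ τ : Set V) = τ := by
    apply Set.Subset.antisymm
    · rintro x ⟨hxσ, hxW⟩
      obtain ⟨a, ha, b, hb, rfl⟩ := hspan hxW
      have hab : (a - b) + b ∈ τ := by simpa using ha
      exact (hτext _ hxσ b (hτsub hb) hab).1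
    · intro x hx
      exact ⟨hτsub hx, Submodule.subset_span hx⟩
  refine ⟨hinter, ?_⟩
  rintro z ⟨x, hx, rfl⟩ ⟨y, hy, hxy⟩
  have hker : x + y ∈ Submodule.span ℝ τ := by
    have : (Submodule.span ℝ τ).mkQ (x + y) = 0 := by
      rw [map_add, hxy]; abel
    rwa [← LinearMap.mem_ker, Submodule.ker_mkQ] at this
  have hxyτ : x + y ∈ τ := by
    rw [← hinter]; exact ⟨haddσ x hx y hy, hker⟩
  have hxτ : x ∈ τ := (hτext x hx y hy hxyτ).1
  rw [← LinearMap.mem_ker, Submodule.ker_mkQ]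
  exact Submodule.subset_span hxτ
end

section
/- Let σ be a convex cone containing 0, τ ⊆ σ an extremal subcone with linear span W. Then the lineality space of σ + W equals W. -/
open Pointwise

/-- If `τ` is an extremal subcone of a convex cone `σ` containing `0`, with linear span `W`,
then the lineality space of the Minkowski sum `σ + W` equals `W`. -/
theorem lineality_of_sum_extremal_span {V : Type*} [AddCommGroup V] [Module ℝ V]
    (σ τ : Set V) (hcone : ∀ x ∈ σ, ∀ t : ℝ, 0 < t → t • x ∈ σ) (hconv : Convex ℝ σ)
    (h0 : (0 : V) ∈ σ)
    (hτne : τ.Nonempty) (hτsub : τ ⊆ σ) (hτconv : Convex ℝ τ)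
    (hτcone : ∀ x ∈ τ, ∀ t : ℝ, 0 < t → t • x ∈ τ)
    (hτext : ∀ x ∈ σ, ∀ y ∈ σ, x + y ∈ τ → x ∈ τ ∧ y ∈ τ) :
    (σ + (Submodule.span ℝ τ : Set V)) ∩ (-(σ + (Submodule.span ℝ τ : Set V))) =
      (Submodule.span ℝ τ : Set V) := by
  -- σ is closed under addition
  have hadd : ∀ u ∈ σ, ∀ v ∈ σ, u + v ∈ σ := by
    intro u hu v hv
    have h2 : ((1:ℝ)/2) • u + ((1:ℝ)/2) • v ∈ σ :=
      hconv hu hv (by norm_num) (by norm_num) (by norm_num)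
    have := hcone _ h2 2 (by norm_num)
    simpa [smul_add, smul_smul] using this
  -- τ ∪ {0} is closed under addition
  have haddτ : ∀ u, (u ∈ τ ∨ u = 0) → ∀ v, (v ∈ τ ∨ v = 0) → (u + v ∈ τ ∨ u + v = 0) := by
    rintro u (hu | rfl) v (hv | rfl)
    · left
      have h2 : ((1:ℝ)/2) • u + ((1:ℝ)/2) • v ∈ τ :=
        hτconv hu hv (by norm_num) (by norm_num) (by norm_num)
      have := hτcone _ h2 2 (by norm_num)
      simpa [smul_add, smul_smul] using this
    · left; simpa using hu
    · left; simpa using hv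
    · right; simp
  have hτσ : ∀ b : V, (b ∈ τ ∨ b = 0) → b ∈ σ := by
    rintro b (hb | rfl)
    · exact hτsub hb
    · exact h0
  -- decomposition of span members as differences
  have hspan : ∀ x ∈ Submodule.span ℝ τ, ∃ a b : V,
      (a ∈ τ ∨ a = 0) ∧ (b ∈ τ ∨ b = 0) ∧ x = a - b := by
    intro x hx
    induction hx using Submodule.span_induction with
    | mem y hy => exact ⟨y, 0, Or.inl hy, Or.inr rfl, by simp⟩
    | zero => exact ⟨0, 0, Or.inr rfl, Or.inr rfl, by simp⟩
    | add y z _ _ hy hz =>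
        obtain ⟨a, b, ha, hb, rfl⟩ := hy
        obtain ⟨c, d, hc, hd, rfl⟩ := hz
        exact ⟨a + c, b + d, haddτ a ha c hc, haddτ b hb d hd, by abel⟩
    | smul c y _ hy =>
        obtain ⟨a, b, ha, hb, rfl⟩ := hy
        rcases lt_trichotomy c 0 with hc | hc | hc
        · refine ⟨(-c) • b, (-c) • a, ?_, ?_, by module⟩
          · rcases hb with hb | rfl
            · exact Or.inl (hτcone _ hb _ (by linarith))
            · right; simp
          · rcases ha with ha | rfl
            · exact Or.inl (hτcone _ ha _ (by linarith))
            · right; simp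
        · exact ⟨0, 0, Or.inr rfl, Or.inr rfl, by simp [hc]⟩
        · refine ⟨c • a, c • b, ?_, ?_, by module⟩
          · rcases ha with ha | rfl
            · exact Or.inl (hτcone _ ha _ hc)
            · right; simp
          · rcases hb with hb | rfl
            · exact Or.inl (hτcone _ hb _ hc)
            · right; simp
  ext x
  constructor
  · rintro ⟨hx1, hx2⟩
    rw [Set.mem_neg] at hx2
    obtain ⟨s₁, hs₁, w₁, hw₁, hx⟩ := hx1
    obtain ⟨s₂, hs₂, w₂, hw₂, hmx⟩ := hx2
    -- s₁ + s₂ ∈ span τ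
    have hsum : s₁ + s₂ ∈ Submodule.span ℝ τ := by
      have : s₁ + s₂ = -(w₁ + w₂) := by
        have := congrArg₂ (· + ·) hx hmx
        simp only at this
        linear_combination (norm := abel) this
      rw [this]
      exact neg_mem (add_mem hw₁ hw₂)
    obtain ⟨a, b, ha, hb, hab⟩ := hspan _ hsum
    -- s₁ + (s₂ + b) = a
    have key : s₁ + (s₂ + b) = a := by
      have : s₁ + s₂ = a - b := hab
      linear_combination (norm := abel) this
    have hs2b : s₂ + b ∈ σ := hadd _ hs₂ _ (hτσ b hb)
    have hs₁W : s₁ ∈ Submodule.span ℝ τ := by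
      rcases ha with ha | ha
      · have := hτext s₁ hs₁ (s₂ + b) hs2b (key ▸ ha)
        exact Submodule.subset_span this.1
      · -- a = 0, so s₁ = -(s₂ + b) ∈ lineality of σ
        have hneg : -s₁ = s₂ + b := by
          rw [ha] at key
          exact neg_eq_of_add_eq_zero_right key
        have hnegσ : -s₁ ∈ σ := hneg ▸ hs2b
        obtain ⟨t, ht⟩ := hτne
        have htσ : t + s₁ ∈ σ := hadd _ (hτsub ht) _ hs₁
        have : (t + s₁) + (-s₁) ∈ τ := by simpa using ht
        have := (hτext _ htσ _ hnegσ this).2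
        have : -s₁ ∈ Submodule.span ℝ τ := Submodule.subset_span this
        simpa using neg_mem this
    have : x ∈ Submodule.span ℝ τ := by
      rw [← hx]
      exact add_mem hs₁W hw₁
    exact this
  · intro hx
    refine ⟨⟨0, h0, x, hx, zero_add x⟩, ?_⟩
    rw [Set.mem_neg]
    exact ⟨0, h0, -x, neg_mem hx, zero_add _⟩
end

section
/- Let π : V → W be a surjective linear map of finite-dimensional real vector spaces and σ a convex cone in V. Under the induced injection π* : W* → V*, the image of the dual cone of π(σ) equals σ∨ ∩ (ker π)⊥. -/
/-- For a surjective linear map `π : V → W` and a convex cone `σ ⊆ V`, the image under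
`π* : W* → V*` of the dual cone of `π(σ)` equals `σ∨ ∩ (ker π)^⊥`. -/
theorem dualCone_image_quotient {V W : Type*} [AddCommGroup V] [Module ℝ V]
    [FiniteDimensional ℝ V] [AddCommGroup W] [Module ℝ W] [FiniteDimensional ℝ W]
    (π : V →ₗ[ℝ] W) (hπ : Function.Surjective π) (σ : Set V)
    (hcone : ∀ x ∈ σ, ∀ t : ℝ, 0 < t → t • x ∈ σ) (hconv : Convex ℝ σ) :
    {φ : V →ₗ[ℝ] ℝ | ∃ ψ : W →ₗ[ℝ] ℝ, (∀ y ∈ π '' σ, 0 ≤ ψ y) ∧ φ = ψ.comp π} =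
      {φ : V →ₗ[ℝ] ℝ | (∀ x ∈ σ, 0 ≤ φ x) ∧ ∀ v ∈ LinearMap.ker π, φ v = 0} := by
  ext φ
  constructor
  · rintro ⟨ψ, hψ, rfl⟩
    refine ⟨fun x hx => hψ (π x) ⟨x, hx, rfl⟩, fun v hv => ?_⟩
    simp [LinearMap.mem_ker.mp hv]
  · rintro ⟨h1, h2⟩
    have hker : LinearMap.ker π ≤ LinearMap.ker φ := fun v hv => h2 v hv
    set e := (π.quotKerEquivOfSurjective hπ).symm
    refine ⟨((LinearMap.ker π).liftQ φ hker).comp (e : W →ₗ[ℝ] V ⧸ LinearMap.ker π), ?_, ?_⟩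
    · rintro y ⟨x, hx, rfl⟩
      have : e (π x) = Submodule.Quotient.mk x := by
        apply (π.quotKerEquivOfSurjective hπ).injective
        simp [e, LinearMap.quotKerEquivOfSurjective]
      simpa [this] using h1 x hx
    · ext x
      have : e (π x) = Submodule.Quotient.mk x := by
        apply (π.quotKerEquivOfSurjective hπ).injective
        simp [e, LinearMap.quotKerEquivOfSurjective]
      simp [this]
end

section
/- Let V = V_Q ⊗ ℝ for a finite-dimensional rational vector space V_Q, and let Q be a subspace of V not contained in any proper subspace of V defined over the rationals. Then there exists v ∈ Q not contained in any proper affine subspace of V defined over the rationals. -/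
/-!
The rational points of `ℝⁿ` form a countable set, and in finite dimension every affine span is
already the span of a finite (affinely independent) subset, so there are only countably many
rational affine subspaces. If every point of `Q` lay in a proper one, Baire's theorem would give
one of them, say `P`, whose trace on `Q` has nonempty interior in `Q`; an affine subspace of `Q`
with nonempty interior is all of `Q`, so `Q ⊆ P`. As `0 ∈ Q`, `P` is then the linear span of
rational vectors, hence `⊤` by the hypothesis on `Q`.
-/

open Set

theorem countable_affineSpan_image_powerset {k V P : Type*} [DivisionRing k] [AddCommGroup V]
    [Module k V] [AddTorsor V P] [FiniteDimensional k V] {R : Set P} (hR : R.Countable) :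
    (affineSpan k '' 𝒫 R).Countable := by
  refine ((countable_ofPred_finite_subset hR).image (affineSpan k)).mono ?_
  rintro _ ⟨A, hAR, rfl⟩
  obtain ⟨t, htA, hspan, hind⟩ := exists_affineIndependent k V A
  exact ⟨t, ⟨finite_set_of_fin_dim_affineIndependent k hind, htA.trans hAR⟩, hspan⟩

theorem coe_affineSpan_eq_span_of_zero_mem {k V : Type*} [Ring k] [AddCommGroup V]
    [Module k V] {A : Set V} (h : (0 : V) ∈ affineSpan k A) :
    (affineSpan k A : Set V) = Submodule.span k A := by
  rw [← affineSpan_insert_eq_affineSpan k h, affineSpan_insert_zero]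

theorem AffineSubspace.top_mem_of_countable_of_biUnion_eq_univ {E : Type*}
    [NormedAddCommGroup E] [NormedSpace ℝ E] [FiniteDimensional ℝ E]
    {S : Set (AffineSubspace ℝ E)} (hS : S.Countable) (hcover : ⋃ P ∈ S, (P : Set E) = univ) :
    ⊤ ∈ S := by
  have := hS.to_subtype
  obtain ⟨P, hP⟩ := nonempty_interior_of_iUnion_of_closed (f := fun P : S => (P.1 : Set E))
    (fun P => P.1.closed_of_finiteDimensional) (by rwa [iUnion_subtype])
  have hPtop : (P : AffineSubspace ℝ E) = ⊤ :=
    top_unique <| (isOpen_interior.affineSpan_eq_top hP).symm.trans_le <|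
      (affineSpan_mono ℝ interior_subset).trans_eq (AffineSubspace.affineSpan_coe _)
  exact hPtop ▸ P.2

theorem Submodule.exists_subset_of_subset_biUnion_affineSubspace {V : Type*}
    [NormedAddCommGroup V] [NormedSpace ℝ V] [FiniteDimensional ℝ V] (Q : Submodule ℝ V)
    {S : Set (AffineSubspace ℝ V)} (hS : S.Countable)
    (hcover : (Q : Set V) ⊆ ⋃ P ∈ S, (P : Set V)) : ∃ P ∈ S, (Q : Set V) ⊆ P := by
  have hcomap : ⋃ P ∈ AffineSubspace.comap Q.subtype.toAffineMap '' S, (P : Set Q) = univ := by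
    refine eq_univ_of_forall fun x => ?_
    obtain ⟨P, hPS, hxP⟩ := mem_iUnion₂.1 (hcover x.2)
    exact mem_biUnion (mem_image_of_mem _ hPS) hxP
  obtain ⟨P, hPS, hP⟩ :=
    AffineSubspace.top_mem_of_countable_of_biUnion_eq_univ (hS.image _) hcomap
  refine ⟨P, hPS, fun x hx => ?_⟩
  have : (⟨x, hx⟩ : Q) ∈ P.comap Q.subtype.toAffineMap := hP ▸ AffineSubspace.mem_top ℝ _ _
  exact this

/-- If a subspace `Q` of `V = ℝ^n` is not contained in any proper subspace of `V` defined
over the rationals, then there exists `v ∈ Q` not contained in any proper affine subspace of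
`V` defined over the rationals. -/
theorem exists_mem_not_in_rational_affine {n : ℕ} (Q : Submodule ℝ (Fin n → ℝ))
    (hQ : ∀ W : Submodule ℝ (Fin n → ℝ),
      (∃ A ⊆ {w : Fin n → ℝ | ∀ j, ∃ q : ℚ, w j = (q : ℝ)}, W = Submodule.span ℝ A) →
      (Q : Set (Fin n → ℝ)) ⊆ (W : Set (Fin n → ℝ)) → W = ⊤) :
    ∃ v ∈ Q, ∀ A : Set (Fin n → ℝ),
      A ⊆ {w : Fin n → ℝ | ∀ j, ∃ q : ℚ, w j = (q : ℝ)} →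
      v ∈ affineSpan ℝ A → affineSpan ℝ A = ⊤ := by
  set R := {w : Fin n → ℝ | ∀ j, ∃ q : ℚ, w j = (q : ℝ)}
  have hR : R.Countable := (countable_pi fun _ => countable_range ((↑) : ℚ → ℝ)).mono
    fun w hw j => (hw j).imp fun _ => Eq.symm
  by_contra! hcon
  obtain ⟨_, ⟨⟨A, hAR, rfl⟩, hA⟩, hQA⟩ := Q.exists_subset_of_subset_biUnion_affineSubspace
    ((countable_affineSpan_image_powerset hR).mono sdiff_subset) fun v hv => by
      obtain ⟨A, hAR, hvA, hA⟩ := hcon v hv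
      exact mem_biUnion (x := affineSpan ℝ A) ⟨⟨A, hAR, rfl⟩, mem_singleton_iff.not.2 hA⟩ hvA
  have hspan := coe_affineSpan_eq_span_of_zero_mem (hQA Q.zero_mem)
  refine hA (SetLike.coe_injective ?_)
  rw [hspan, hQ _ ⟨A, hAR, rfl⟩ (hspan ▸ hQA)]
  rfl
end

section
/- Let S be a submonoid of a finitely generated free abelian group, let ZS be the subgroup it generates, QS = ZS ⊗ Q, and σ_S the convex cone in RS = ZS ⊗ ℝ generated by S. Then QS ∩ σ_S equals the set of nonnegative rational linear combinations of elements of S. -/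
open Matrix

/-- Coordinatewise rational-to-real cast as a `ℚ`-linear map. -/
noncomputable def ratCastPi (d : ℕ) : (Fin d → ℚ) →ₗ[ℚ] (Fin d → ℝ) where
  toFun q := fun i => (q i : ℝ)
  map_add' a b := by funext i; simp
  map_smul' a q := by funext i; simp [Rat.smul_def]

lemma li_ratCast {d : ℕ} {ι : Type*} [Fintype ι] [DecidableEq ι] {v : ι → (Fin d → ℚ)}
    (hv : LinearIndependent ℚ v) :
    LinearIndependent ℝ (fun m => fun i => ((v m i : ℚ) : ℝ)) := by
  classical
  set M : Matrix (Fin d) ι ℚ := Matrix.of (fun j m => v m j) with hM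
  have hker : LinearMap.ker (Matrix.toLin' M) = ⊥ := by
    rw [LinearMap.ker_eq_bot']
    intro g hg
    have hsum : ∑ m, g m • v m = 0 := by
      funext j
      have := congrFun hg j
      simp only [Matrix.toLin'_apply, Matrix.mulVec, dotProduct, Pi.zero_apply,
        Matrix.of_apply, hM] at this
      simpa [Finset.sum_apply, mul_comm] using this
    funext m
    exact Fintype.linearIndependent_iff.mp hv g hsum m
  obtain ⟨gL, hgL⟩ := (Matrix.toLin' M).exists_leftInverse_of_injective hker
  set N := LinearMap.toMatrix' gL with hN
  have hNM : N * M = 1 := by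
    have h2 := congrArg LinearMap.toMatrix' hgL
    rwa [LinearMap.toMatrix'_comp, LinearMap.toMatrix'_toLin', LinearMap.toMatrix'_id] at h2
  set M' : Matrix (Fin d) ι ℝ := M.map (fun q => (q : ℝ)) with hM'
  set N' : Matrix ι (Fin d) ℝ := N.map (fun q => (q : ℝ)) with hN'
  have hNM' : N' * M' = 1 := by
    have h3 : (N * M).map ((Rat.castHom ℝ) : ℚ → ℝ) =
        (1 : Matrix ι ι ℚ).map ((Rat.castHom ℝ) : ℚ → ℝ) := by rw [hNM]
    rwa [Matrix.map_mul, Matrix.map_one _ (map_zero _) (map_one _)] at h3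
  have hinj' : Function.Injective (Matrix.toLin' M') := by
    have hli : Function.LeftInverse (Matrix.toLin' N') (Matrix.toLin' M') := by
      intro x
      rw [← Matrix.toLin'_mul_apply, hNM', Matrix.toLin'_one, LinearMap.id_apply]
    exact hli.injective
  rw [Fintype.linearIndependent_iff]
  intro g hg m
  have h0 : Matrix.toLin' M' g = Matrix.toLin' M' 0 := by
    rw [map_zero, Matrix.toLin'_apply]
    funext j
    have := congrFun hg j
    simp only [Finset.sum_apply, Pi.smul_apply, smul_eq_mul, Pi.zero_apply] at this
    simpa [Matrix.mulVec, dotProduct, hM', hM, mul_comm] using this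
  have := hinj' h0
  rw [this]
  rfl

lemma ratCastPi_intCast {d : ℕ} (m : Fin d → ℤ) :
    ratCastPi d (fun i => (m i : ℚ)) = fun i => (m i : ℝ) := by
  funext i; simp [ratCastPi]

lemma rat_smul_real {d : ℕ} (a : ℚ) (z : Fin d → ℝ) : a • z = (a : ℝ) • z := by
  rw [show ((a : ℝ)) = algebraMap ℚ ℝ a from (eq_ratCast (algebraMap ℚ ℝ) a).symm,
    algebraMap_smul]

lemma keyB {d : ℕ} : ∀ (n : ℕ) (t : Finset (Fin d → ℤ)), t.card ≤ n →
    ∀ (q : Fin d → ℚ) (c : (Fin d → ℤ) → ℝ), (∀ m ∈ t, 0 ≤ c m) →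
    (fun i => (q i : ℝ)) = (∑ m ∈ t, c m • fun i => (m i : ℝ)) →
    ∃ c' : (Fin d → ℤ) → ℚ, (∀ m ∈ t, 0 ≤ c' m) ∧
      (fun i => (q i : ℝ)) = (∑ m ∈ t, ((c' m : ℝ)) • fun i => (m i : ℝ)) := by
  intro n
  induction n with
  | zero =>
    intro t ht q c _ hx
    have : t = ∅ := Finset.card_eq_zero.mp (Nat.le_zero.mp ht)
    subst this
    exact ⟨0, by simp, by simpa using hx⟩
  | succ n ih =>
    intro t ht q c hc hx
    classical
    by_cases hind : LinearIndependent ℝ (fun m : ↥t => (fun i => ((m : Fin d → ℤ) i : ℝ)))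
    · -- independent case
      set v : ↥t → (Fin d → ℚ) := fun m => fun i => ((m : Fin d → ℤ) i : ℚ) with hv_def
      have hcastfam : (fun m : ↥t => fun i => ((v m i : ℚ) : ℝ)) =
          (fun m : ↥t => (fun i => ((m : Fin d → ℤ) i : ℝ))) := by
        funext m i; simp [hv_def]
      have hxt : (fun i => (q i : ℝ)) =
          ∑ m : ↥t, c ↑m • (fun i => (((m : Fin d → ℤ)) i : ℝ)) := by
        rw [Finset.sum_coe_sort t (fun m => c m • fun i => ((m i : ℤ) : ℝ))]
        exact hx
      have hqmem : q ∈ Submodule.span ℚ (Set.range v) := by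
        by_contra h
        have hvQ : LinearIndependent ℚ v := by
          have h1 : LinearIndependent ℚ (fun m : ↥t => (fun i => ((m : Fin d → ℤ) i : ℝ))) :=
            hind.restrict_scalars (R := ℚ) (by
              intro a b hab
              have : ((a : ℝ)) = (b : ℝ) := by simpa [Rat.smul_def] using hab
              exact_mod_cast this)
          have h2 : LinearIndependent ℚ (fun m : ↥t => ratCastPi d (v m)) := by
            rw [show (fun m : ↥t => ratCastPi d (v m)) =
              (fun m : ↥t => (fun i => ((m : Fin d → ℤ) i : ℝ))) from by
                funext m; rw [hv_def]; exact ratCastPi_intCast _]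
            exact h1
          exact LinearIndependent.of_comp (ratCastPi d) h2
        have hopt : LinearIndependent ℚ (fun o => Option.casesOn' o q v : Option ↥t → _) :=
          hvQ.option h
        have hoptR := li_ratCast hopt
        set gO : Option ↥t → ℝ := fun o => o.elim (-1 : ℝ) (fun m => c m.1) with hgO
        have hzero : ∑ o : Option ↥t,
            gO o • (fun i => (((Option.casesOn' o q v : Fin d → ℚ)) i : ℝ)) = 0 := by
          rw [Fintype.sum_option]
          have e1 : (∑ x : ↥t, gO (some x) •
              (fun i => (((Option.casesOn' (some x) q v : Fin d → ℚ)) i : ℝ))) =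
              ∑ m : ↥t, c ↑m • (fun i => (((m : Fin d → ℤ)) i : ℝ)) := by
            refine Finset.sum_congr rfl fun m _ => ?_
            have h1 : gO (some m) = c ↑m := rfl
            have h2 : (fun i => (((Option.casesOn' (some m) q v : Fin d → ℚ)) i : ℝ)) =
                (fun i => (((m : Fin d → ℤ)) i : ℝ)) := by
              funext i
              show ((v m i : ℚ) : ℝ) = (((m : Fin d → ℤ)) i : ℝ)
              simp only [hv_def]
              simp
            rw [h1, h2]
          rw [e1, ← hxt]
          show (-1 : ℝ) • (fun i => (q i : ℝ)) + (fun i => (q i : ℝ)) = 0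
          funext i
          simp
        have hnone := Fintype.linearIndependent_iff.mp hoptR gO hzero none
        have : (-1 : ℝ) = 0 := hnone
        norm_num at this
      obtain ⟨g, hg⟩ := (Submodule.mem_span_range_iff_exists_fun ℚ).mp hqmem
      have hx2 : (fun i => (q i : ℝ)) =
          ∑ m : ↥t, (g m : ℝ) • (fun i => (((m : Fin d → ℤ)) i : ℝ)) := by
        have := congrArg (ratCastPi d) hg
        rw [map_sum] at this
        calc (fun i => (q i : ℝ)) = ratCastPi d q := rfl
          _ = ∑ m : ↥t, ratCastPi d (g m • v m) := this.symm
          _ = ∑ m : ↥t, (g m : ℝ) • (fun i => (((m : Fin d → ℤ)) i : ℝ)) := by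
              refine Finset.sum_congr rfl fun m _ => ?_
              rw [(ratCastPi d).map_smul, rat_smul_real]
              congr 1
      have hceq : ∀ m : ↥t, c ↑m = (g m : ℝ) := by
        have hrel : ∑ m : ↥t, (c ↑m - (g m : ℝ)) •
            (fun i => (((m : Fin d → ℤ)) i : ℝ)) = 0 := by
          simp only [sub_smul, Finset.sum_sub_distrib]
          rw [← hxt, ← hx2, sub_self]
        intro m
        have := Fintype.linearIndependent_iff.mp hind (fun m => c ↑m - (g m : ℝ)) hrel m
        linarith
      set cG : (Fin d → ℤ) → ℚ := fun m => if h : m ∈ t then g ⟨m, h⟩ else 0 with hcG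
      refine ⟨cG, ?_, ?_⟩
      · intro m hm
        have hEq : cG m = g ⟨m, hm⟩ := by rw [hcG]; simp only [dif_pos hm]
        rw [hEq]
        have : (0 : ℝ) ≤ (g ⟨m, hm⟩ : ℝ) := by rw [← hceq ⟨m, hm⟩]; exact hc m hm
        exact_mod_cast this
      · rw [hx]
        refine Finset.sum_congr rfl fun m hm => ?_
        have hEq : cG m = g ⟨m, hm⟩ := by rw [hcG]; simp only [dif_pos hm]
        rw [hEq, ← hceq ⟨m, hm⟩]
    · -- dependent case
      obtain ⟨g, hgsum, m1, hm1pos⟩ : ∃ g : ↥t → ℝ,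
          (∑ m : ↥t, g m • (fun i => (((m : Fin d → ℤ)) i : ℝ))) = 0 ∧ ∃ m1, 0 < g m1 := by
        obtain ⟨g, hgsum, m1, hne⟩ := Fintype.not_linearIndependent_iff.mp hind
        rcases hne.lt_or_gt with hlt | hlt
        · refine ⟨-g, ?_, m1, by simpa using hlt⟩
          rw [← neg_eq_zero] at hgsum
          rw [← hgsum, ← Finset.sum_neg_distrib]
          exact Finset.sum_congr rfl fun m _ => by simp [neg_smul]
        · exact ⟨g, hgsum, m1, hlt⟩
      set t' : Finset ↥t := Finset.univ.filter (fun m => 0 < g m) with ht'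
      obtain ⟨m0, hm0mem, hm0min⟩ := Finset.exists_min_image t' (fun m => c ↑m / g m)
        ⟨m1, by simp [ht', hm1pos]⟩
      have hgm0 : 0 < g m0 := by
        have := Finset.mem_filter.mp hm0mem; exact this.2
      set τ : ℝ := c ↑m0 / g m0 with hτ
      have hτ0 : 0 ≤ τ := div_nonneg (hc _ m0.2) hgm0.le
      set cNew : (Fin d → ℤ) → ℝ := fun m => if h : m ∈ t then c m - τ * g ⟨m, h⟩ else 0
        with hcNew
      have hnonneg : ∀ m ∈ t, 0 ≤ cNew m := by
        intro m hm
        rw [hcNew]; simp only [dif_pos hm]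
        by_cases hgm : 0 < g ⟨m, hm⟩
        · have hmem : (⟨m, hm⟩ : ↥t) ∈ t' := by simp [ht', hgm]
          have := hm0min _ hmem
          have : τ * g ⟨m, hm⟩ ≤ c m := by
            rw [hτ] at this ⊢
            exact (le_div_iff₀ hgm).mp this
          linarith
        · push_neg at hgm
          have h1 : τ * g ⟨m, hm⟩ ≤ 0 := mul_nonpos_of_nonneg_of_nonpos hτ0 hgm
          have h2 := hc m hm
          linarith
      have hzero0 : cNew ↑m0 = 0 := by
        rw [hcNew]; simp only [dif_pos m0.2]
        rw [hτ, Subtype.coe_eta, div_mul_cancel₀ _ hgm0.ne']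
        ring
      have hsum : (fun i => (q i : ℝ)) = (∑ m ∈ t, cNew m • fun i => (m i : ℝ)) := by
        rw [← Finset.sum_coe_sort t (fun m => cNew m • fun i => ((m i : ℤ) : ℝ))]
        have : ∀ m : ↥t, cNew ↑m • (fun i => (((m : Fin d → ℤ)) i : ℝ)) =
            c ↑m • (fun i => (((m : Fin d → ℤ)) i : ℝ)) -
            τ • (g m • (fun i => (((m : Fin d → ℤ)) i : ℝ))) := by
          intro m
          rw [hcNew]; simp only [dif_pos m.2, Subtype.coe_eta]
          rw [sub_smul, smul_smul]
        rw [Finset.sum_congr rfl fun m _ => this m, Finset.sum_sub_distrib,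
          ← Finset.smul_sum, hgsum, smul_zero, sub_zero,
          Finset.sum_coe_sort t (fun m => c m • fun i => ((m i : ℤ) : ℝ))]
        exact hx
      have hxerase : (fun i => (q i : ℝ)) =
          (∑ m ∈ t.erase ↑m0, cNew m • fun i => (m i : ℝ)) := by
        rw [Finset.sum_erase _ (by rw [hzero0, zero_smul])]
        exact hsum
      have hcard : (t.erase ↑m0).card ≤ n := by
        have h1 := Finset.card_erase_of_mem m0.2
        omega
      obtain ⟨c', hc'nn, hc'sum⟩ := ih (t.erase ↑m0) hcard q cNew
        (fun m hm => hnonneg m (Finset.mem_of_mem_erase hm)) hxerase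
      set cF : (Fin d → ℤ) → ℚ := fun m => if m = ↑m0 then 0 else c' m with hcF
      refine ⟨cF, ?_, ?_⟩
      · intro m hm
        by_cases h : m = ↑m0
        · rw [hcF]; simp [h]
        · rw [hcF]
          simp only [if_neg h]
          exact hc'nn m (Finset.mem_erase.mpr ⟨h, hm⟩)
      · rw [← Finset.add_sum_erase t _ m0.2]
        have h1 : ((cF ↑m0 : ℚ) : ℝ) = 0 := by rw [hcF]; simp
        have h2 : (∑ m ∈ t.erase ↑m0, ((cF m : ℚ) : ℝ) • fun i => ((m i : ℤ) : ℝ)) =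
            ∑ m ∈ t.erase ↑m0, ((c' m : ℝ)) • fun i => ((m i : ℤ) : ℝ) := by
          refine Finset.sum_congr rfl fun m hm => ?_
          rw [hcF]
          simp only [if_neg (Finset.ne_of_mem_erase hm)]
        rw [h1, h2, ← hc'sum, zero_smul, zero_add]

/-- For a submonoid `S` of `ℤ^d` embedded in `ℝ^d`, the intersection of `QS = ℚ`-span of `S`
with the real convex cone `σ_S` generated by `S` equals the set of nonnegative rational
linear combinations of elements of `S`. -/
theorem rat_inter_cone_eq_nonneg_rat_combos {d : ℕ} (S : AddSubmonoid (Fin d → ℤ)) :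
    {x : Fin d → ℝ |
        x ∈ Submodule.span ℚ ((fun m : Fin d → ℤ => fun i => (m i : ℝ)) ''
          (S : Set (Fin d → ℤ)))} ∩
      {x : Fin d → ℝ | ∃ (t : Finset (Fin d → ℤ)) (c : (Fin d → ℤ) → ℝ),
        ↑t ⊆ (S : Set (Fin d → ℤ)) ∧ (∀ m ∈ t, 0 ≤ c m) ∧
        x = ∑ m ∈ t, c m • fun i => (m i : ℝ)} =
    {x : Fin d → ℝ | ∃ (t : Finset (Fin d → ℤ)) (c : (Fin d → ℤ) → ℚ),
        ↑t ⊆ (S : Set (Fin d → ℤ)) ∧ (∀ m ∈ t, 0 ≤ c m) ∧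
        x = ∑ m ∈ t, (c m : ℝ) • fun i => (m i : ℝ)} := by
  ext x
  simp only [Set.mem_inter_iff, Set.mem_setOf_eq]
  constructor
  · rintro ⟨hspan, t, c, htS, hcnn, hxeq⟩
    have hle : Submodule.span ℚ ((fun m : Fin d → ℤ => fun i => (m i : ℝ)) ''
        (S : Set (Fin d → ℤ))) ≤ LinearMap.range (ratCastPi d) := by
      rw [Submodule.span_le]
      rintro _ ⟨m, _, rfl⟩
      exact ⟨fun i => (m i : ℚ), ratCastPi_intCast m⟩
    obtain ⟨q, hq⟩ := hle hspan
    have hq' : (fun i => (q i : ℝ)) = x := hq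
    obtain ⟨c', hc'nn, hc'sum⟩ := keyB t.card t le_rfl q c hcnn (by rw [hq']; exact hxeq)
    exact ⟨t, c', htS, hc'nn, by rw [← hq']; exact hc'sum⟩
  · rintro ⟨t, c, htS, hcnn, rfl⟩
    refine ⟨?_, t, fun m => (c m : ℝ), htS, fun m hm => by
      show (0:ℝ) ≤ (c m : ℝ)
      exact_mod_cast hcnn m hm, rfl⟩
    refine Submodule.sum_mem _ fun m hm => ?_
    rw [← rat_smul_real]
    exact Submodule.smul_mem _ _ (Submodule.subset_span ⟨m, htS hm, rfl⟩)
end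

section
/- Let M be a finitely generated free abelian group, M_R = M ⊗ ℝ, and σ a convex cone in M_R containing 0. Then the quotient group M / Z(σ ∩ M) is torsion-free, where Z(σ ∩ M) is the subgroup of M generated by σ ∩ M. -/
/-!
If `n • m = a - b` with `a, b` lattice points of `σ`, then `n • (m + b) = a + (n - 1) • b` is a
lattice point of `σ`, hence so is `m + b` (divide by `n` inside the cone), and `m = (m + b) - b`
lies in the subgroup generated by `σ ∩ M`. The only property of `σ ∩ M` used is that it is an
`nsmul`-saturated submonoid, and saturation passes to the subgroup it generates.
-/

namespace AddSubmonoid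

variable {G : Type*} [AddCommGroup G]

theorem mem_closure_iff_exists_sub (S : AddSubmonoid G) {x : G} :
    x ∈ AddSubgroup.closure (S : Set G) ↔ ∃ a ∈ S, ∃ b ∈ S, a - b = x := by
  refine ⟨fun hx => ?_, ?_⟩
  · induction hx using AddSubgroup.closure_induction with
    | mem z hz => exact ⟨z, hz, 0, S.zero_mem, sub_zero z⟩
    | zero => exact ⟨0, S.zero_mem, 0, S.zero_mem, sub_zero 0⟩
    | add _ _ _ _ hz hw =>
      obtain ⟨a, ha, b, hb, rfl⟩ := hz
      obtain ⟨c, hc, e, he, rfl⟩ := hw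
      exact ⟨a + c, S.add_mem ha hc, b + e, S.add_mem hb he, by abel⟩
    | neg _ _ hz =>
      obtain ⟨a, ha, b, hb, rfl⟩ := hz
      exact ⟨b, hb, a, ha, (neg_sub a b).symm⟩
  · rintro ⟨a, ha, b, hb, rfl⟩
    exact sub_mem (AddSubgroup.subset_closure ha) (AddSubgroup.subset_closure hb)

theorem NSMulSaturated.closure {S : AddSubmonoid G} (hS : S.NSMulSaturated) :
    (AddSubgroup.closure (S : Set G)).toAddSubmonoid.NSMulSaturated := by
  rintro (_ | k) x hx
  · exact Or.inl rfl
  obtain ⟨a, ha, b, hb, hab⟩ := S.mem_closure_iff_exists_sub.mp hx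
  have hxb : (k + 1) • (x + b) = a + k • b := by
    rw [nsmul_add, ← hab, succ_nsmul]
    abel
  have hxb_mem : x + b ∈ S :=
    (hS (hxb ▸ S.add_mem ha (S.nsmul_mem hb k))).resolve_left k.succ_ne_zero
  exact Or.inr (S.mem_closure_iff_exists_sub.mpr ⟨x + b, hxb_mem, b, hb, add_sub_cancel_right x b⟩)

theorem NSMulSaturated.comap {H : Type*} [AddCommGroup H] {S : AddSubmonoid H}
    (hS : S.NSMulSaturated) (f : G →+ H) : (S.comap f).NSMulSaturated := fun n x hx =>
  (hS (by rwa [mem_comap, map_nsmul] at hx)).imp_right mem_comap.mpr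

end AddSubmonoid

theorem QuotientAddGroup.isAddTorsionFree_of_nsmulSaturated {G : Type*} [AddCommGroup G]
    {H : AddSubgroup G} (hH : H.toAddSubmonoid.NSMulSaturated) : IsAddTorsionFree (G ⧸ H) := by
  refine ⟨fun n hn y z hyz => ?_⟩
  induction y using QuotientAddGroup.induction_on with | H y => ?_
  induction z using QuotientAddGroup.induction_on with | H z => ?_
  simp only [← QuotientAddGroup.mk_nsmul, QuotientAddGroup.eq] at hyz ⊢
  rw [← smul_neg, ← nsmul_add] at hyz
  exact (hH hyz).resolve_left hn

section ConvexCone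

variable {E : Type*} [AddCommGroup E] [Module ℝ E]

def convexConeAddSubmonoid (σ : Set E) (hcone : ∀ x ∈ σ, ∀ t : ℝ, 0 < t → t • x ∈ σ)
    (hconv : Convex ℝ σ) (h0 : (0 : E) ∈ σ) : AddSubmonoid E where
  carrier := σ
  zero_mem' := h0
  add_mem' {x y} hx hy := by
    have hmid := hcone _ (hconv hx hy (by norm_num : (0 : ℝ) ≤ 1 / 2)
      (by norm_num : (0 : ℝ) ≤ 1 / 2) (by norm_num)) 2 two_pos
    rwa [smul_add, smul_smul, smul_smul, mul_one_div_cancel two_ne_zero, one_smul, one_smul]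
      at hmid

theorem convexConeAddSubmonoid_nsmulSaturated (σ : Set E)
    (hcone : ∀ x ∈ σ, ∀ t : ℝ, 0 < t → t • x ∈ σ) (hconv : Convex ℝ σ) (h0 : (0 : E) ∈ σ) :
    (convexConeAddSubmonoid σ hcone hconv h0).NSMulSaturated := by
  rintro (_ | k) x hx
  · exact Or.inl rfl
  have hk : (0 : ℝ) < k + 1 := k.cast_add_one_pos
  have hdiv := hcone _ hx (k + 1 : ℝ)⁻¹ (inv_pos.mpr hk)
  rw [← Nat.cast_smul_eq_nsmul ℝ, Nat.cast_add_one, inv_smul_smul₀ hk.ne'] at hdiv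
  exact Or.inr hdiv

end ConvexCone

/-- For a convex cone `σ ⊆ ℝ^d` containing `0`, the quotient of `ℤ^d` by the subgroup
generated by the lattice points of `σ` is torsion-free. -/
theorem quotient_by_cone_lattice_torsionFree {d : ℕ} (σ : Set (Fin d → ℝ))
    (hcone : ∀ x ∈ σ, ∀ t : ℝ, 0 < t → t • x ∈ σ) (hconv : Convex ℝ σ)
    (h0 : (0 : Fin d → ℝ) ∈ σ) :
    ∀ (y : (Fin d → ℤ) ⧸ AddSubgroup.closure {m : Fin d → ℤ | (fun i => (m i : ℝ)) ∈ σ})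
      (n : ℕ), 0 < n → n • y = 0 → y = 0 := by
  have hsat : (AddSubgroup.closure {m : Fin d → ℤ | (fun i => (m i : ℝ)) ∈ σ}).NSMulSaturated :=
    ((convexConeAddSubmonoid_nsmulSaturated σ hcone hconv h0).comap
      ((Int.castAddHom ℝ).compLeft (Fin d))).closure
  have := QuotientAddGroup.isAddTorsionFree_of_nsmulSaturated hsat
  intro y n hn hny
  exact (nsmul_eq_zero_iff_right hn.ne').mp hny
end

section
/- Let k be a field of characteristic p > 0, M a finitely generated free abelian group, and σ a convex cone in M ⊗ ℝ containing 0. Then the monoid algebra k[σ ∩ M] is Frobenius split, i.e., the Frobenius endomorphism splits as a map of k[σ ∩ M]-modules. -/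
/-!
A Frobenius splitting of the field `k` is a `k`-linear retraction `T` of `k^p ⊆ k`, which exists
because `k` is a vector space over `k^p`. On `k[S]` it induces the map sending `c·χ^m` to
`T(c)·χ^(m/p)` when `m ∈ pS` and to `0` otherwise. This is a Frobenius splitting as soon as
`S` is `p`-saturated: for a cone, `p • z ∈ σ` forces `z ∈ σ`.
-/

/-- `φ : F_* R → R` is `R`-linear, where `a • b = a ^ p * b` on `F_* R`, and `φ 1 = 1`. -/
def IsFrobeniusSplitting {R : Type*} [CommSemiring R] (p : ℕ) (φ : R →+ R) : Prop :=
  φ 1 = 1 ∧ ∀ a b, φ (a ^ p * b) = a * φ b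

theorem RingHom.exists_retraction {K L : Type*} [Field K] [CommRing L] [Nontrivial L]
    (f : K →+* L) : ∃ T : L →+ K, T 1 = 1 ∧ ∀ c x, T (f c * x) = c * T x := by
  let := f.toAlgebra
  obtain ⟨g, hg⟩ := (Algebra.linearMap K L).exists_leftInverse_of_injective
    (LinearMap.ker_eq_bot.mpr (algebraMap K L).injective)
  refine ⟨g.toAddMonoidHom, by simpa using LinearMap.congr_fun hg 1, fun c x => ?_⟩
  rw [← RingHom.algebraMap_toAlgebra f, ← Algebra.smul_def]
  exact g.map_smul c x

theorem exists_isFrobeniusSplitting (k : Type*) [Field k] (p : ℕ) [ExpChar k p] :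
    ∃ T : k →+ k, IsFrobeniusSplitting p T := by
  obtain ⟨T, hT1, hT⟩ := (frobenius k p).exists_retraction
  exact ⟨T, hT1, fun c x => by simpa [frobenius_def] using hT c x⟩

namespace AddMonoidAlgebra

variable {R M : Type*} [CommSemiring R] [AddCommMonoid M] {p : ℕ}

/-- The map `c·χ^m ↦ T(c)·χ^(m/p)`, zero on monomials outside `p • M`. -/
noncomputable def frobeniusSplitting (T : R →+ R) (hinj : Function.Injective (p • · : M → M)) :
    AddMonoidAlgebra R M →+ AddMonoidAlgebra R M :=
  coeffAddEquiv.symm.toAddMonoidHom.comp <| (Finsupp.mapRange.addMonoidHom T).comp <|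
    (Finsupp.comapDomain.addMonoidHom hinj).comp coeffAddEquiv.toAddMonoidHom

theorem coeff_frobeniusSplitting (T : R →+ R) (hinj : Function.Injective (p • · : M → M))
    (x : AddMonoidAlgebra R M) (n : M) :
    (frobeniusSplitting T hinj x).coeff n = T (x.coeff (p • n)) := by
  simp [frobeniusSplitting, Finsupp.comapDomain.addMonoidHom, Finsupp.comapDomain_apply]

variable {T : R →+ R} {hinj : Function.Injective (p • · : M → M)}

theorem frobeniusSplitting_single_nsmul (n : M) (c : R) :
    frobeniusSplitting T hinj (single (p • n) c) = single n (T c) := by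
  ext m
  rw [coeff_frobeniusSplitting, coeff_single, coeff_single, Finsupp.single_apply_left hinj,
    Finsupp.apply_single' T (map_zero T)]

theorem frobeniusSplitting_single_pow_mul [IsLeftCancelAdd M] (hT : IsFrobeniusSplitting p T)
    (hsat : ∀ u v n : M, p • u + v = p • n → ∃ w, p • w = v) (u : M) (c : R)
    (x : AddMonoidAlgebra R M) :
    frobeniusSplitting T hinj (single u c ^ p * x) = single u c * frobeniusSplitting T hinj x := by
  ext n
  rw [coeff_frobeniusSplitting, single_pow]
  by_cases h : ∃ w, u + w = n
  · obtain ⟨w, rfl⟩ := h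
    rw [coeff_single_mul_eq_mul_coeff (p • w) fun _ _ => by rw [smul_add, add_right_inj],
      coeff_single_mul_eq_mul_coeff w fun _ _ => add_right_inj u, hT.2, coeff_frobeniusSplitting]
  · push Not at h
    -- a monomial `χ^v` of `x` contributes to `χ^(p • n)` only if `v ∈ p • M`, by `hsat`
    rw [coeff_single_mul_of_forall_add_ne _ _ h, coeff_single_mul_of_forall_add_ne, map_zero]
    intro v hv
    obtain ⟨w, rfl⟩ := hsat u v n hv
    exact h w (hinj (by simpa [smul_add] using hv))

theorem isFrobeniusSplitting_frobeniusSplitting [IsLeftCancelAdd M] [ExpChar R p]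
    (hT : IsFrobeniusSplitting p T) (hsat : ∀ u v n : M, p • u + v = p • n → ∃ w, p • w = v) :
    IsFrobeniusSplitting p (frobeniusSplitting T hinj) := by
  have : ExpChar (AddMonoidAlgebra R M) p :=
    expChar_of_injective_algebraMap single_right_injective p
  refine ⟨?_, fun a b => ?_⟩
  · rw [one_def, ← smul_zero p, frobeniusSplitting_single_nsmul, hT.1, smul_zero]
  induction a using AddMonoidAlgebra.induction with
  | zero => simp [zero_pow (expChar_pos R p).ne']
  | single_add u c a _ _ ih =>
    rw [add_pow_expChar, add_mul, map_add, add_mul, ih,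
      frobeniusSplitting_single_pow_mul hT hsat]

end AddMonoidAlgebra

theorem AddSubmonoid.nsmul_right_injective {G : Type*} [AddCommGroup G] [IsAddTorsionFree G]
    (S : AddSubmonoid G) {n : ℕ} (hn : n ≠ 0) : Function.Injective (n • · : S → S) :=
  fun _ _ h => Subtype.val_injective <| _root_.nsmul_right_injective hn congr(Subtype.val $h)

theorem AddSubmonoid.exists_nsmul_eq_of_nsmul_add_eq_nsmul {G : Type*} [AddCommGroup G]
    {S : AddSubmonoid G} {n : ℕ} (hroot : ∀ z : G, n • z ∈ S → z ∈ S) (u v w : S)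
    (h : n • u + v = n • w) : ∃ x : S, n • x = v := by
  have hv : n • ((w : G) - u) = v := by
    have h' : n • (u : G) + v = n • (w : G) := by exact_mod_cast congr(Subtype.val $h)
    rw [smul_sub, ← h', add_sub_cancel_left]
  exact ⟨⟨_, hroot _ (hv ▸ v.2)⟩, Subtype.ext hv⟩

theorem mem_of_nsmul_mem_of_cone {ι : Type*} {σ : Set (ι → ℝ)}
    (hcone : ∀ x ∈ σ, ∀ t : ℝ, 0 < t → t • x ∈ σ) {S : AddSubmonoid (ι → ℤ)}
    (hS : ∀ m : ι → ℤ, m ∈ S ↔ (fun i => (m i : ℝ)) ∈ σ) {n : ℕ} (hn : n ≠ 0) (z : ι → ℤ)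
    (hz : n • z ∈ S) : z ∈ S := by
  rw [hS] at hz ⊢
  convert hcone _ hz (n : ℝ)⁻¹ (by positivity) using 1
  funext i
  simp [hn]

theorem monoidAlgebra_frobenius_split_general {d : ℕ} (k : Type*) [Field k] (p : ℕ)
    [Fact p.Prime] [CharP k p] (σ : Set (Fin d → ℝ))
    (hcone : ∀ x ∈ σ, ∀ t : ℝ, 0 < t → t • x ∈ σ)
    (S : AddSubmonoid (Fin d → ℤ))
    (hS : ∀ m : Fin d → ℤ, m ∈ S ↔ (fun i => (m i : ℝ)) ∈ σ) :
    ∃ φ : AddMonoidAlgebra k S →+ AddMonoidAlgebra k S,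
      φ 1 = 1 ∧ ∀ a b : AddMonoidAlgebra k S, φ (a ^ p * b) = a * φ b := by
  obtain ⟨T, hT⟩ := exists_isFrobeniusSplitting k p
  have hp : p ≠ 0 := (Fact.out : p.Prime).ne_zero
  have hsat := AddSubmonoid.exists_nsmul_eq_of_nsmul_add_eq_nsmul
    (mem_of_nsmul_mem_of_cone hcone hS hp)
  exact ⟨_, AddMonoidAlgebra.isFrobeniusSplitting_frobeniusSplitting
    (hinj := S.nsmul_right_injective hp) hT hsat⟩

/-- For a field `k` of characteristic `p > 0` and a convex cone `σ ⊆ ℝ^d` containing `0`,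
the monoid algebra `k[σ ∩ ℤ^d]` is Frobenius split: there is an additive map `φ` with
`φ 1 = 1` and `φ (a^p * b) = a * φ b`, i.e. an `R`-linear splitting of Frobenius. -/
theorem monoidAlgebra_frobenius_split {d : ℕ} (k : Type*) [Field k] (p : ℕ)
    [Fact p.Prime] [CharP k p] (σ : Set (Fin d → ℝ))
    (hcone : ∀ x ∈ σ, ∀ t : ℝ, 0 < t → t • x ∈ σ) (hconv : Convex ℝ σ)
    (h0 : (0 : Fin d → ℝ) ∈ σ)
    (S : AddSubmonoid (Fin d → ℤ))
    (hS : ∀ m : Fin d → ℤ, m ∈ S ↔ (fun i => (m i : ℝ)) ∈ σ) :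
    ∃ φ : AddMonoidAlgebra k S →+ AddMonoidAlgebra k S,
      φ 1 = 1 ∧ ∀ a b : AddMonoidAlgebra k S, φ (a ^ p * b) = a * φ b :=
  monoidAlgebra_frobenius_split_general k p σ hcone S hS
end

section
/- Let R be a split-F-regular integral domain of characteristic p > 0. Then R is integrally closed in its fraction field. -/
/-- `R` is split-F-regular: for every nonzero `c ∈ R` there exist `e > 0` and an `R`-linear
map `F^e_* R → R` sending `F^e_* c` to `1`, encoded as an additive map `φ : R → R` with
`φ (a ^ p ^ e * b) = a * φ b` and `φ c = 1`. -/
def SplitFRegular (R : Type*) [CommRing R] (p : ℕ) : Prop :=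
  ∀ c : R, c ≠ 0 → ∃ e : ℕ, 0 < e ∧ ∃ φ : R →+ R,
    (∀ a b : R, φ (a ^ p ^ e * b) = a * φ b) ∧ φ c = 1

/-- A split-F-regular integral domain of characteristic `p > 0` is integrally closed in its
fraction field. -/
theorem splitFRegular_isIntegrallyClosed (R : Type*) [CommRing R] [IsDomain R] (p : ℕ)
    [Fact p.Prime] [CharP R p] (h : SplitFRegular R p) : IsIntegrallyClosed R := by
  set K := FractionRing R
  rw [isIntegrallyClosed_iff K]
  intro x hx
  -- common denominator
  obtain ⟨s, hs⟩ := hx.fg_adjoin_singleton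
  obtain ⟨c, hc⟩ := IsLocalization.exist_integer_multiples_of_finset (nonZeroDivisors R) s
  have hc0 : (c : R) ≠ 0 := nonZeroDivisors.coe_ne_zero c
  have hcK : algebraMap R K (c : R) ≠ 0 :=
    fun h0 => hc0 (by simpa using (IsFractionRing.injective R K) (h0.trans (map_zero _).symm))
  have key : ∀ m : ℕ, ∃ r : R, algebraMap R K (c : R) * x ^ m = algebraMap R K r := by
    intro m
    have hxm : x ^ m ∈ Submodule.span R (↑s : Set K) := by
      rw [hs]
      exact pow_mem (Algebra.self_mem_adjoin_singleton R x) m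
    have : ∀ y ∈ Submodule.span R (↑s : Set K),
        ∃ r : R, algebraMap R K (c : R) * y = algebraMap R K r := by
      intro y hy
      induction hy using Submodule.span_induction with
      | mem z hz =>
        obtain ⟨r, hr⟩ := hc z hz
        exact ⟨r, by rw [hr, Algebra.smul_def]⟩
      | zero => exact ⟨0, by simp⟩
      | add y z _ _ hy hz =>
        obtain ⟨r, hr⟩ := hy; obtain ⟨r', hr'⟩ := hz
        exact ⟨r + r', by rw [mul_add, hr, hr', map_add]⟩
      | smul a y _ hy =>
        obtain ⟨r, hr⟩ := hy
        refine ⟨a * r, ?_⟩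
        rw [map_mul, ← hr, Algebra.smul_def]; ring
    exact this _ hxm
  obtain ⟨e, he, φ, hφ, hφc⟩ := h (c : R) hc0
  obtain ⟨r₁, hr₁⟩ := by simpa using key 1
  obtain ⟨d, hd⟩ := key (p ^ e)
  -- r₁ ^ p ^ e * c = c ^ p ^ e * d in R
  have hRd : r₁ ^ p ^ e * (c : R) = (c : R) ^ p ^ e * d := by
    apply IsFractionRing.injective R K
    rw [map_mul, map_mul, map_pow, map_pow, ← hr₁, ← hd]
    ring
  have : r₁ = (c : R) * φ d := by
    calc r₁ = r₁ * φ (c : R) := by rw [hφc, mul_one]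
    _ = φ (r₁ ^ p ^ e * (c : R)) := (hφ r₁ (c : R)).symm
    _ = φ ((c : R) ^ p ^ e * d) := by rw [hRd]
    _ = (c : R) * φ d := hφ _ _
  refine ⟨φ d, ?_⟩
  have h2 : algebraMap R K (c : R) * x = algebraMap R K (c : R) * algebraMap R K (φ d) := by
    rw [hr₁, this, map_mul]
  exact (mul_left_cancel₀ hcK h2).symm
end

section
/- Let R be a split-F-regular integral domain of characteristic p > 0 and let R ↪ T be a module-finite ring extension. Then the inclusion R ↪ T splits as a map of R-modules (R is a splinter). -/
open nonZeroDivisors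

theorem Module.Finite.exists_lift_of_isLocalizedModule_of_injective {R : Type*} [CommRing R]
    (S : Submonoid R) {M N N' : Type*} [AddCommGroup M] [Module R M] [Module.Finite R M]
    [AddCommGroup N] [Module R N] [AddCommGroup N'] [Module R N']
    (f : N →ₗ[R] N') [IsLocalizedModule S f] (hf : Function.Injective f) (g : M →ₗ[R] N') :
    ∃ (h : M →ₗ[R] N) (s : S), f ∘ₗ h = s • g := by
  obtain ⟨σ, hσ⟩ := Module.Finite.fg_top (R := R) (M := M)
  obtain ⟨s, hs⟩ := IsLocalizedModule.exist_integer_multiples S f σ g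
  have hrange : LinearMap.range (s • g) ≤ LinearMap.range f := by
    rw [LinearMap.range_eq_map, ← hσ, Submodule.map_span_le]
    exact hs
  let e := LinearEquiv.ofInjective f hf
  refine ⟨e.symm.toLinearMap ∘ₗ (s • g).codRestrict _ fun m ↦ hrange ⟨m, rfl⟩, s, ?_⟩
  ext m
  exact congrArg Subtype.val (e.apply_symm_apply _)

theorem Module.exists_linearMap_apply_ne_zero {R M : Type*} [CommRing R] [IsDomain R]
    [AddCommGroup M] [Module R M] [Module.Finite R M] {m : M} (hm : m ∉ Submodule.torsion R M) :
    ∃ ψ : M →ₗ[R] R, ψ m ≠ 0 := by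
  let K := FractionRing R
  let ι := LocalizedModule.mkLinearMap R⁰ M
  have hιm : ι m ≠ 0 := by
    rwa [Ne, IsLocalizedModule.eq_zero_iff R⁰ ι, ← Submodule.mem_torsion_iff]
  obtain ⟨f, hf⟩ := Module.Projective.exists_dual_ne_zero K hιm
  obtain ⟨ψ, s, hψ⟩ := Module.Finite.exists_lift_of_isLocalizedModule_of_injective R⁰
    (Algebra.linearMap R K) (IsFractionRing.injective R K) ((f.restrictScalars R) ∘ₗ ι)
  refine ⟨ψ, fun hψm ↦ ?_⟩
  have hs : algebraMap R K s * f (ι m) = 0 := by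
    simpa [hψm, Submonoid.smul_def, Algebra.smul_def] using (LinearMap.congr_fun hψ m).symm
  rcases mul_eq_zero.mp hs with hs0 | hf0
  · exact nonZeroDivisors.coe_ne_zero s (IsFractionRing.injective R K (by rw [hs0, map_zero]))
  · exact hf hf0

section FrobeniusTwist

variable {R T : Type*} [CommRing R] [CommRing T] [Algebra R T] (p e : ℕ) [ExpChar T p]
  (φ : R →+ R) (hφ : ∀ a b : R, φ (a ^ p ^ e * b) = a * φ b) (ψ : T →ₗ[R] R)

/-- The composite `F^e_* T → F^e_* R → R` of `F^e_* ψ` with `φ`, read on the underlying sets. -/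
def LinearMap.frobeniusTwist : T →ₗ[R] R where
  toFun x := φ (ψ (x ^ p ^ e))
  map_add' x y := by rw [add_pow_expChar_pow, map_add, map_add]
  map_smul' r x := by rw [smul_pow, map_smul, smul_eq_mul, hφ, RingHom.id_apply, smul_eq_mul]

@[simp]
theorem LinearMap.frobeniusTwist_apply (x : T) :
    frobeniusTwist p e φ hφ ψ x = φ (ψ (x ^ p ^ e)) :=
  rfl

end FrobeniusTwist

theorem splitFRegular_splinter_general (R T : Type*) [CommRing R] [IsDomain R] (p : ℕ)
    [Fact p.Prime] [CharP R p] (h : SplitFRegular R p)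
    [CommRing T] [Algebra R T] (hinj : Function.Injective (algebraMap R T))
    [Module.Finite R T] :
    ∃ φ : T →ₗ[R] R, φ 1 = 1 := by
  have : CharP T p := charP_of_injective_algebraMap hinj p
  have h1 : (1 : T) ∉ Submodule.torsion R T := by
    rintro ⟨a, ha⟩
    refine nonZeroDivisors.coe_ne_zero a (hinj ?_)
    rwa [map_zero, Algebra.algebraMap_eq_smul_one]
  obtain ⟨ψ, hψ⟩ := Module.exists_linearMap_apply_ne_zero h1
  obtain ⟨e, -, φ, hφ, hφψ⟩ := h (ψ 1) hψ
  exact ⟨LinearMap.frobeniusTwist p e φ hφ ψ, by simpa using hφψ⟩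

/-- A split-F-regular domain is a splinter: every module-finite ring extension `R ↪ T`
splits as a map of `R`-modules. -/
theorem splitFRegular_splinter (R T : Type*) [CommRing R] [IsDomain R] (p : ℕ)
    [Fact p.Prime] [CharP R p] (h : SplitFRegular R p)
    [CommRing T] [IsDomain T] [Algebra R T] (hinj : Function.Injective (algebraMap R T))
    [Module.Finite R T] :
    ∃ φ : T →ₗ[R] R, φ 1 = 1 :=
  splitFRegular_splinter_general R T p h hinj
end

section
/- Let M be a finitely generated free abelian group, σ a convex cone in M ⊗ ℝ containing 0, and H a linear hyperplane of M ⊗ ℝ defined over the rationals. Set σ_H = σ ∩ H and M_H = M ∩ H. Then the monoid algebra k[σ_H ∩ M_H] is a direct summand, as a k[σ_H ∩ M_H]-module, of k[σ ∩ M]; in particular if k[σ ∩ M] is split-F-regular then so is k[σ_H ∩ M_H]. -/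
theorem SplitFRegular.of_retraction {R A : Type*} [CommRing R] [CommRing A] {p : ℕ}
    (ι : R →+* A) (π : A →+ R) (hπι : ∀ r, π (ι r) = r)
    (hπ : ∀ r a, π (ι r * a) = r * π a) (hA : SplitFRegular A p) : SplitFRegular R p := by
  intro c hc
  have hιc : ι c ≠ 0 := fun h => hc (by rw [← hπι c, h, map_zero])
  obtain ⟨e, he, φ, hφ, hφc⟩ := hA (ι c) hιc
  refine ⟨e, he, π.comp (φ.comp ι.toAddMonoidHom), fun a b => ?_, ?_⟩
  · show π (φ (ι (a ^ p ^ e * b))) = a * π (φ (ι b))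
    rw [map_mul, map_pow, hφ, hπ]
  · show π (φ (ι c)) = 1
    rw [hφc, ← map_one ι, hπι]

theorem AddSubmonoid.mem_range_inclusion_of_add_mem {M : Type*} [AddGroup M]
    {S T : AddSubmonoid M} {G : AddSubgroup M} (hT : ∀ m, m ∈ T ↔ m ∈ S ∧ m ∈ G)
    (hle : T ≤ S) (s : T) (t : S) (h : inclusion hle s + t ∈ Set.range (inclusion hle)) :
    t ∈ Set.range (inclusion hle) := by
  obtain ⟨u, hu⟩ := h
  have hsu : (t : M) = -(s : M) + u := by
    rw [eq_neg_add_iff_add_eq]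
    exact congrArg Subtype.val hu.symm
  have htG : (t : M) ∈ G := by
    rw [hsu]
    exact G.add_mem (G.neg_mem ((hT s).mp s.2).2) ((hT u).mp u.2).2
  exact ⟨⟨t, (hT t).mpr ⟨t.2, htG⟩⟩, rfl⟩

namespace AddMonoidAlgebra

variable {k N M : Type*} [Semiring k]

theorem comapDomain_mapDomain (f : N → M) (hf : Function.Injective f)
    (x : AddMonoidAlgebra k N) :
    comapDomain f hf (mapDomain f x) = x := by
  ext n
  simp [Finsupp.mapDomain_apply hf]

theorem comapDomain_single_of_notMem_range {f : N → M} (hf : Function.Injective f) {m : M}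
    (hm : m ∉ Set.range f) (r : k) : comapDomain f hf (single m r) = 0 := by
  ext n
  simp [show f n ≠ m from fun h => hm ⟨n, h⟩]

theorem comapDomain_mapDomain_mul [AddMonoid N] [AddMonoid M] (ι : N →+ M)
    (hι : Function.Injective ι) (hsat : ∀ n m, ι n + m ∈ Set.range ι → m ∈ Set.range ι)
    (x : AddMonoidAlgebra k N) (y : AddMonoidAlgebra k M) :
    comapDomain ι hι (mapDomain ι x * y) = x * comapDomain ι hι y := by
  induction x using induction_linear with
  | zero => simp
  | add x₁ x₂ h₁ h₂ => rw [mapDomain_add, add_mul, comapDomain_add, h₁, h₂, add_mul]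
  | single n a =>
    induction y using induction_linear with
    | zero => simp
    | add y₁ y₂ h₁ h₂ => rw [mul_add, comapDomain_add, h₁, h₂, comapDomain_add, mul_add]
    | single m b =>
      rw [mapDomain_single, single_mul_single]
      by_cases hm : m ∈ Set.range ι
      · obtain ⟨m, rfl⟩ := hm
        rw [← map_add, comapDomain_single_map, comapDomain_single_map, single_mul_single]
      · have hnm : ι n + m ∉ Set.range ι := fun h => hm (hsat n m h)
        rw [comapDomain_single_of_notMem_range hι hnm, comapDomain_single_of_notMem_range hι hm,
          mul_zero]

end AddMonoidAlgebra

theorem hyperplane_section_direct_summand_general {d : ℕ} (k : Type*) [Field k] (p : ℕ)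
    (σ : Set (Fin d → ℝ))
    (H : Submodule ℝ (Fin d → ℝ))
    (S SH : AddSubmonoid (Fin d → ℤ))
    (hS : ∀ m : Fin d → ℤ, m ∈ S ↔ (fun i => (m i : ℝ)) ∈ σ)
    (hSH : ∀ m : Fin d → ℤ, m ∈ SH ↔
      ((fun i => (m i : ℝ)) ∈ σ ∧ (fun i => (m i : ℝ)) ∈ H))
    (hle : SH ≤ S) :
    (∃ π : AddMonoidAlgebra k S →+ AddMonoidAlgebra k SH,
        (∀ g : AddMonoidAlgebra k SH,
          π (AddMonoidAlgebra.mapDomainRingHom k (AddSubmonoid.inclusion hle) g) = g) ∧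
        (∀ (g : AddMonoidAlgebra k SH) (f : AddMonoidAlgebra k S),
          π (AddMonoidAlgebra.mapDomainRingHom k (AddSubmonoid.inclusion hle) g * f) =
            g * π f)) ∧
      (SplitFRegular (AddMonoidAlgebra k S) p → SplitFRegular (AddMonoidAlgebra k SH) p) := by
  let ι := AddSubmonoid.inclusion hle
  have hι : Function.Injective ι := AddSubmonoid.inclusion_injective hle
  have hSH_eq : ∀ m, m ∈ SH ↔
      m ∈ S ∧ m ∈ H.toAddSubgroup.comap ((Int.castAddHom ℝ).compLeft (Fin d)) :=
    fun m => by rw [hSH, hS]; rfl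
  have hsat : ∀ s t, ι s + t ∈ Set.range ι → t ∈ Set.range ι :=
    AddSubmonoid.mem_range_inclusion_of_add_mem hSH_eq hle
  let π := AddMonoidAlgebra.comapDomainAddMonoidHom (R := k) ι hι
  have hπι : ∀ g, π (AddMonoidAlgebra.mapDomainRingHom k ι g) = g :=
    AddMonoidAlgebra.comapDomain_mapDomain ι hι
  have hπ : ∀ g f, π (AddMonoidAlgebra.mapDomainRingHom k ι g * f) = g * π f :=
    AddMonoidAlgebra.comapDomain_mapDomain_mul ι hι hsat
  exact ⟨⟨π, hπι, hπ⟩, SplitFRegular.of_retraction _ π hπι hπ⟩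

/-- Let `σ ⊆ ℝ^d` be a convex cone containing `0` and `H` a rational linear hyperplane.
With `S = σ ∩ ℤ^d` and `S_H = (σ ∩ H) ∩ (ℤ^d ∩ H)`, the monoid algebra `k[S_H]` is a direct
summand of `k[S]` as a `k[S_H]`-module (there is a retraction of the inclusion which is
`k[S_H]`-linear); in particular if `k[S]` is split-F-regular then so is `k[S_H]`. -/
theorem hyperplane_section_direct_summand {d : ℕ} (k : Type*) [Field k] (p : ℕ)
    [Fact p.Prime] [CharP k p] (σ : Set (Fin d → ℝ))
    (hcone : ∀ x ∈ σ, ∀ t : ℝ, 0 < t → t • x ∈ σ) (hconv : Convex ℝ σ)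
    (h0 : (0 : Fin d → ℝ) ∈ σ)
    (H : Submodule ℝ (Fin d → ℝ))
    (hHhyp : ∃ φ : (Fin d → ℝ) →ₗ[ℝ] ℝ, φ ≠ 0 ∧ H = LinearMap.ker φ)
    (hHrat : ∃ A ⊆ {w : Fin d → ℝ | ∀ j, ∃ q : ℚ, w j = (q : ℝ)}, H = Submodule.span ℝ A)
    (S SH : AddSubmonoid (Fin d → ℤ))
    (hS : ∀ m : Fin d → ℤ, m ∈ S ↔ (fun i => (m i : ℝ)) ∈ σ)
    (hSH : ∀ m : Fin d → ℤ, m ∈ SH ↔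
      ((fun i => (m i : ℝ)) ∈ σ ∧ (fun i => (m i : ℝ)) ∈ H))
    (hle : SH ≤ S) :
    (∃ π : AddMonoidAlgebra k S →+ AddMonoidAlgebra k SH,
        (∀ g : AddMonoidAlgebra k SH,
          π (AddMonoidAlgebra.mapDomainRingHom k (AddSubmonoid.inclusion hle) g) = g) ∧
        (∀ (g : AddMonoidAlgebra k SH) (f : AddMonoidAlgebra k S),
          π (AddMonoidAlgebra.mapDomainRingHom k (AddSubmonoid.inclusion hle) g * f) =
            g * π f)) ∧
      (SplitFRegular (AddMonoidAlgebra k S) p → SplitFRegular (AddMonoidAlgebra k SH) p) :=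
  hyperplane_section_direct_summand_general k p σ H S SH hS hSH hle
end
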